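/- arXiv:1701.04875 — 2 statements merged into one kernel-verified Lean document; each statement's English description precedes it below -/
import Mathlib

section
/- Let Ω ⊆ ℂ be a bounded domain, J ⊆ ∂Ω a nonempty compact set, and n a positive integer. Then the set Eₙ = { g ∈ R(Ω) : for every z₀ ∈ J there exists z ∈ J with 0 < |z − z₀| < 1/n and |g(z) − g(z₀)| > n·|z − z₀| } is an open subset of R(Ω) with respect to the supremum norm. -/
open scoped Classical in
/-- Extend a continuous map on `E` to all of `ℂ` by zero. -/
noncomputable def extendFn (E : Set ℂ) (f : C(E, ℂ)) : ℂ → ℂ :=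
  fun z => if h : z ∈ E then f ⟨z, h⟩ else 0

/-- Restrictions to `E` of rational functions with poles off `E`. -/
def ratRestrict (E : Set ℂ) : Set C(E, ℂ) :=
  {f | ∃ p q : Polynomial ℂ, (∀ z ∈ E, q.eval z ≠ 0) ∧
    ∀ z : E, f z = p.eval (z : ℂ) / q.eval (z : ℂ)}

/-! For a fixed witness `z`, the condition "`z` witnesses steepness of `f` at `z₀`" is open in
`(f, z₀)` jointly, because evaluation `C(K, ℂ) × K → ℂ` is continuous when `K` is locally compact
(e.g. closed in `ℂ`). Hence the pairs `(f, z₀)` admitting a witness form an open set, and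
requiring this for all `z₀` in the compact set `J` keeps the set open by the tube lemma. -/

lemma extendFn_of_mem (E : Set ℂ) (f : C(E, ℂ)) {z : ℂ} (hz : z ∈ E) :
    extendFn E f z = f ⟨z, hz⟩ := by
  simp [extendFn, hz]

@[simp]
lemma extendFn_coe (E : Set ℂ) (f : C(E, ℂ)) (z : E) : extendFn E f z = f z :=
  extendFn_of_mem E f z.2

theorem isOpen_setOf_forall_mem_exists_mem {X Y Z : Type*} [TopologicalSpace X]
    [TopologicalSpace Y] {J : Set Y} (hJ : IsCompact J) (W : Set Z) {P : X → Y → Z → Prop}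
    (hP : ∀ z ∈ W, IsOpen {p : X × Y | P p.1 p.2 z}) :
    IsOpen {x | ∀ y ∈ J, ∃ z ∈ W, P x y z} := by
  rw [isOpen_iff_eventually]
  intro x hx
  refine hJ.eventually_forall_of_forall_eventually fun y hy => ?_
  obtain ⟨z, hzW, hxyz⟩ := hx y hy
  exact ((hP z hzW).eventually_mem (x := (x, y)) hxyz).mono fun p hp => ⟨z, hzW, hp⟩

theorem isOpen_setOf_forall_exists_steep {K J : Set ℂ} (hK : IsClosed K) (hJK : J ⊆ K)
    (hJ : IsCompact J) (L δ : ℝ) :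
    IsOpen {f : C(K, ℂ) | ∀ z₀ ∈ J, ∃ z ∈ J, 0 < ‖z - z₀‖ ∧ ‖z - z₀‖ < δ ∧
      L * ‖z - z₀‖ < ‖extendFn K f z - extendFn K f z₀‖} := by
  have := hK.locallyCompactSpace
  have hJ' : IsCompact (((↑) : K → ℂ) ⁻¹' J) := by
    rw [Subtype.isCompact_iff, Subtype.image_preimage_coe, Set.inter_eq_right.2 hJK]
    exact hJ
  have hset : {f : C(K, ℂ) | ∀ z₀ ∈ J, ∃ z ∈ J, 0 < ‖z - z₀‖ ∧ ‖z - z₀‖ < δ ∧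
      L * ‖z - z₀‖ < ‖extendFn K f z - extendFn K f z₀‖} =
      {f | ∀ y ∈ ((↑) : K → ℂ) ⁻¹' J, ∃ z ∈ J, 0 < ‖z - y‖ ∧ ‖z - y‖ < δ ∧
        L * ‖z - y‖ < ‖extendFn K f z - f y‖} := by
    ext f
    refine ⟨fun h y hy => by simpa using h y hy, fun h z₀ hz₀ => ?_⟩
    simpa [extendFn_of_mem K f (hJK hz₀)] using h ⟨z₀, hJK hz₀⟩ hz₀
  rw [hset]
  refine isOpen_setOf_forall_mem_exists_mem hJ' J fun z hz => ?_
  simp only [extendFn_of_mem K _ (hJK hz)]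
  have hdist : Continuous fun p : C(K, ℂ) × K => ‖z - p.2‖ := by fun_prop
  exact (isOpen_lt continuous_const hdist).inter <| (isOpen_lt hdist continuous_const).inter <|
    isOpen_lt (continuous_const.mul hdist) (by fun_prop)

theorem En_isOpen_general (Ω : Set ℂ)
    (J : Set ℂ) (hJfr : J ⊆ frontier Ω) (hJcpt : IsCompact J)
    (n : ℕ) :
    let R : Set C(closure Ω, ℂ) := closure (ratRestrict (closure Ω))
    let E : Set ↥R :=
      {g | ∀ z₀ ∈ J, ∃ z ∈ J, 0 < ‖z - z₀‖ ∧
        ‖z - z₀‖ < 1 / (n : ℝ) ∧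
        (n : ℝ) * ‖z - z₀‖ <
          ‖extendFn (closure Ω) g.1 z - extendFn (closure Ω) g.1 z₀‖}
    IsOpen E := by
  intro R E
  exact (isOpen_setOf_forall_exists_steep isClosed_closure
    (hJfr.trans frontier_subset_closure) hJcpt n (1 / n)).preimage continuous_subtype_val

/-- Let `Ω ⊆ ℂ` be a bounded domain, `J ⊆ ∂Ω` a nonempty compact set and `n ≥ 1`.  Then
`Eₙ = {g ∈ R(Ω) : ∀ z₀ ∈ J, ∃ z ∈ J, 0 < |z - z₀| < 1/n and |g z - g z₀| > n |z - z₀|}`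
is open in `R(Ω)` for the supremum norm (on the compact set `cl Ω` the compact-open topology
coincides with the topology of the supremum norm). -/
theorem En_isOpen (Ω : Set ℂ) (hΩopen : IsOpen Ω) (hΩconn : IsConnected Ω)
    (hΩbdd : Bornology.IsBounded Ω)
    (J : Set ℂ) (hJne : J.Nonempty) (hJfr : J ⊆ frontier Ω) (hJcpt : IsCompact J)
    (n : ℕ) (hn : 0 < n) :
    let R : Set C(closure Ω, ℂ) := closure (ratRestrict (closure Ω))
    let E : Set ↥R :=
      {g | ∀ z₀ ∈ J, ∃ z ∈ J, 0 < ‖z - z₀‖ ∧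
        ‖z - z₀‖ < 1 / (n : ℝ) ∧
        (n : ℝ) * ‖z - z₀‖ <
          ‖extendFn (closure Ω) g.1 z - extendFn (closure Ω) g.1 z₀‖}
    IsOpen E :=
  En_isOpen_general Ω J hJfr hJcpt n
end

section
/- Let Ω = {z ∈ ℂ : Re z > 0} ∖ [1, +∞) (the open right half-plane with the closed real ray from 1 to infinity removed) and J = [1, +∞) ⊆ ∂Ω. Then there is no function f that is continuous on cl(Ω) and holomorphic on Ω and has infinite difference quotients at every point z₀ ∈ J along J. In fact, every such f extends holomorphically to the whole open right half-plane, and consequently for every z₀ ∈ J the difference quotients of f at z₀ along J stay bounded. -/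
/-!
Every point of the half-plane `H` lies in the closure of `Ω`, so `f` is continuous on `H` and
holomorphic off the real axis. Such an `f` has vanishing integrals over every rectangle in `H`:
cutting the rectangle along the real axis leaves two rectangles that meet the axis only in an
edge, and Cauchy–Goursat needs holomorphy only in the open rectangle. By Morera's theorem `f` is
holomorphic on `H`; in particular its difference quotients are bounded near each point of the ray.
-/

/-- `f` has infinite difference quotients at `z₀` along `J`. -/
def HasInfDiffQuot (f : ℂ → ℂ) (J : Set ℂ) (z₀ : ℂ) : Prop :=
  ∀ M > (0:ℝ), ∀ δ > (0:ℝ), ∃ z ∈ J,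
    0 < ‖z - z₀‖ ∧ ‖z - z₀‖ < δ ∧
      M * ‖z - z₀‖ < ‖f z - f z₀‖

open Complex Set intervalIntegral
open scoped Interval

section RealAxis

variable {E : Type*} [NormedAddCommGroup E] {f : ℂ → E} {z w : ℂ}

lemma integral_boundary_rect_eq_zero_of_zero_notMem_Ioo [NormedSpace ℂ E] [CompleteSpace E]
    (hc : ContinuousOn f (Rectangle z w))
    (hd : DifferentiableOn ℂ f (Rectangle z w \ {u | u.im = 0}))
    (h0 : (0:ℝ) ∉ Ioo (min z.im w.im) (max z.im w.im)) :
    (∫ x : ℝ in z.re..w.re, f (x + z.im * I)) - (∫ x : ℝ in z.re..w.re, f (x + w.im * I)) +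
      I • (∫ y : ℝ in z.im..w.im, f (w.re + y * I)) -
      I • (∫ y : ℝ in z.im..w.im, f (z.re + y * I)) = 0 := by
  refine integral_boundary_rect_eq_zero_of_continuousOn_of_differentiableOn f z w hc (hd.mono ?_)
  rintro u ⟨hre, him⟩
  exact ⟨⟨Ioo_subset_Icc_self hre, Ioo_subset_Icc_self him⟩, fun hu => h0 (hu ▸ him)⟩

lemma ContinuousOn.intervalIntegrable_vertical (hc : ContinuousOn f (Rectangle z w)) {x : ℝ}
    (hx : x ∈ [[z.re, w.re]]) {a b : ℝ} (hab : [[a, b]] ⊆ [[z.im, w.im]]) :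
    IntervalIntegrable (fun y : ℝ => f (x + y * I)) MeasureTheory.volume a b := by
  refine ContinuousOn.intervalIntegrable (hc.comp (by fun_prop) fun y hy => ?_)
  simpa [Rectangle, mem_reProdIm] using ⟨hx, hab hy⟩

lemma integral_boundary_rect_eq_zero_of_differentiableOn_diff_real [NormedSpace ℂ E]
    [CompleteSpace E]
    (hc : ContinuousOn f (Rectangle z w))
    (hd : DifferentiableOn ℂ f (Rectangle z w \ {u | u.im = 0})) :
    (∫ x : ℝ in z.re..w.re, f (x + z.im * I)) - (∫ x : ℝ in z.re..w.re, f (x + w.im * I)) +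
      I • (∫ y : ℝ in z.im..w.im, f (w.re + y * I)) -
      I • (∫ y : ℝ in z.im..w.im, f (z.re + y * I)) = 0 := by
  by_cases h0 : (0:ℝ) ∈ Ioo (min z.im w.im) (max z.im w.im)
  swap
  · exact integral_boundary_rect_eq_zero_of_zero_notMem_Ioo hc hd h0
  have h0' : (0:ℝ) ∈ [[z.im, w.im]] := Ioo_subset_Icc_self h0
  have hlow : Rectangle z ⟨w.re, 0⟩ ⊆ Rectangle z w :=
    reProdIm_subset_iff.2 (prod_mono le_rfl (uIcc_subset_uIcc left_mem_uIcc h0'))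
  have hupp : Rectangle ⟨z.re, 0⟩ w ⊆ Rectangle z w :=
    reProdIm_subset_iff.2 (prod_mono le_rfl (uIcc_subset_uIcc h0' right_mem_uIcc))
  have hlow₀ := integral_boundary_rect_eq_zero_of_zero_notMem_Ioo (hc.mono hlow)
    (hd.mono (sdiff_subset_sdiff_left hlow)) (by rcases le_total z.im 0 with h | h <;> simp [h])
  have hupp₀ := integral_boundary_rect_eq_zero_of_zero_notMem_Ioo (hc.mono hupp)
    (hd.mono (sdiff_subset_sdiff_left hupp)) (by rcases le_total w.im 0 with h | h <;> simp [h])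
  have hvert : ∀ x ∈ [[z.re, w.re]], (∫ y : ℝ in z.im..0, f (x + y * I)) +
      (∫ y : ℝ in 0..w.im, f (x + y * I)) = ∫ y : ℝ in z.im..w.im, f (x + y * I) :=
    fun x hx => integral_add_adjacent_intervals
      (hc.intervalIntegrable_vertical hx (uIcc_subset_uIcc left_mem_uIcc h0'))
      (hc.intervalIntegrable_vertical hx (uIcc_subset_uIcc h0' right_mem_uIcc))
  rw [← hvert w.re right_mem_uIcc, ← hvert z.re left_mem_uIcc]
  simp only [ofReal_zero, zero_mul, add_zero] at hlow₀ hupp₀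
  linear_combination (norm := module) hlow₀ + hupp₀

theorem differentiableOn_of_differentiableOn_diff_real [NormedSpace ℂ E] [CompleteSpace E]
    {U : Set ℂ} (hU : IsOpen U) (hc : ContinuousOn f U)
    (hd : DifferentiableOn ℂ f (U \ {u | u.im = 0})) :
    DifferentiableOn ℂ f U := by
  refine (isConservativeOn_and_continuousOn_iff_isDifferentiableOn hU).1 ⟨fun z w hzw => ?_, hc⟩
  rw [← add_eq_zero_iff_eq_neg, wedgeIntegral_add_wedgeIntegral_eq]
  exact integral_boundary_rect_eq_zero_of_differentiableOn_diff_real (hc.mono hzw)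
    (hd.mono (sdiff_subset_sdiff_left hzw))

end RealAxis

lemma DifferentiableAt.exists_norm_sub_le_mul {𝕜 E F : Type*} [NontriviallyNormedField 𝕜]
    [NormedAddCommGroup E] [NormedSpace 𝕜 E] [NormedAddCommGroup F] [NormedSpace 𝕜 F]
    {f : E → F} {x₀ : E} (hf : DifferentiableAt 𝕜 f x₀) :
    ∃ M > (0:ℝ), ∃ δ > (0:ℝ), ∀ x, ‖x - x₀‖ < δ → ‖f x - f x₀‖ ≤ M * ‖x - x₀‖ := by
  obtain ⟨M, hM, hO⟩ := hf.isBigO_sub.exists_pos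
  obtain ⟨δ, hδ, h⟩ := Metric.eventually_nhds_iff.1 hO.bound
  exact ⟨M, hM, δ, hδ, fun x hx => h (by rwa [dist_eq_norm])⟩

lemma not_hasInfDiffQuot_of_norm_sub_le_mul {f : ℂ → ℂ} {J : Set ℂ} {z₀ : ℂ} {M δ : ℝ}
    (hδ : 0 < δ) (hbound : ∀ z ∈ J, ‖z - z₀‖ < δ → ‖f z - f z₀‖ ≤ M * ‖z - z₀‖) :
    ¬ HasInfDiffQuot f J z₀ := by
  intro h
  obtain ⟨z, hzJ, -, hzδ, hzM⟩ := h (max M 1) (by positivity) δ hδ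
  have hM := mul_le_mul_of_nonneg_right (le_max_left M 1) (norm_nonneg (z - z₀))
  linarith [hbound z hzJ hzδ]

lemma interior_ray_eq_empty : interior {z : ℂ | z.im = 0 ∧ 1 ≤ z.re} = ∅ := by
  have : {z : ℂ | z.im = 0 ∧ 1 ≤ z.re} = Ici 1 ×ℂ {0} := by ext; simp [mem_reProdIm, and_comm]
  rw [this, interior_reProdIm, interior_singleton]
  simp

lemma isClosed_ray : IsClosed {z : ℂ | z.im = 0 ∧ 1 ≤ z.re} :=
  (isClosed_eq continuous_im continuous_const).inter (isClosed_le continuous_const continuous_re)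

/-- For `Ω = {Re z > 0} \ [1, ∞)` and `J = [1, ∞) ⊆ ∂Ω`, every function continuous on `cl Ω`
and holomorphic on `Ω` extends holomorphically to the whole open right half-plane (i.e. it is
holomorphic on `{Re z > 0}`); hence its difference quotients along `J` stay bounded at every
point of `J`, and no such function has infinite difference quotients at every point of `J`
along `J`. -/
theorem slit_halfPlane_empty :
    let ray : Set ℂ := {z | z.im = 0 ∧ 1 ≤ z.re}
    let H : Set ℂ := {z | 0 < z.re}
    let Ω : Set ℂ := H \ ray
    ray ⊆ frontier Ω ∧
      ∀ f : ℂ → ℂ, ContinuousOn f (closure Ω) → DifferentiableOn ℂ f Ω →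
      DifferentiableOn ℂ f H ∧
      (∀ z₀ ∈ ray, ∃ M > (0:ℝ), ∃ δ > (0:ℝ), ∀ z ∈ ray,
        ‖z - z₀‖ < δ →
          ‖f z - f z₀‖ ≤ M * ‖z - z₀‖) ∧
      ¬ (∀ z₀ ∈ ray, HasInfDiffQuot f ray z₀) := by
  intro ray H Ω
  have hH : IsOpen H := isOpen_lt continuous_const continuous_re
  have hrayH : ray ⊆ H := fun z hz => one_pos.trans_le hz.2
  have hHΩ : H ⊆ closure Ω :=
    (interior_eq_empty_iff_dense_compl.1 interior_ray_eq_empty).open_subset_closure_inter hH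
  refine ⟨fun z hz => ?_, fun f hc hd => ?_⟩
  · rw [(hH.sdiff isClosed_ray).frontier_eq]
    exact ⟨hHΩ (hrayH hz), fun hzΩ => hzΩ.2 hz⟩
  have hfH : DifferentiableOn ℂ f H := differentiableOn_of_differentiableOn_diff_real hH
    (hc.mono hHΩ) (hd.mono fun z hz => ⟨hz.1, fun hzray => hz.2 hzray.1⟩)
  have hbound : ∀ z₀ ∈ ray, ∃ M > (0:ℝ), ∃ δ > (0:ℝ), ∀ z ∈ ray,
      ‖z - z₀‖ < δ → ‖f z - f z₀‖ ≤ M * ‖z - z₀‖ := fun z₀ hz₀ => by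
    obtain ⟨M, hM, δ, hδ, h⟩ :=
      (hfH.differentiableAt (hH.mem_nhds (hrayH hz₀))).exists_norm_sub_le_mul
    exact ⟨M, hM, δ, hδ, fun z _ => h z⟩
  refine ⟨hfH, hbound, fun hinf => ?_⟩
  have h1 : (1 : ℂ) ∈ ray := by simp [ray]
  obtain ⟨M, -, δ, hδ, h⟩ := hbound 1 h1
  exact not_hasInfDiffQuot_of_norm_sub_le_mul hδ h (hinf 1 h1)
end
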